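/- arXiv:math/0310077 — 2 statements merged into one kernel-verified Lean document; each statement's English description precedes it below -/
import Mathlib

section
/- Assume m ≥ 1 and Re(a) < 1. Then there exists exactly one function p : ℝ → ℂ satisfying all of the following: p(u) = 0 for u ≤ 0; p(u) = (C_0/Γ(1−a))·u^{−a} for 0 < u ≤ v_1 (u^{−a} the complex power of the positive real u); p is continuous on (0, ∞); and u^a·p(u) = v_1^a·p(v_1) − ∫_{v_1}^u t^{a−1}·(Σ_{j=1}^m α_j p(t − v_j)) dt for all u ≥ v_1. -/
open MeasureTheory Filter Set

/-- The constant `C₀ = ∏_{j=1}^m (v_j e^γ)^{−α_j}`, with `γ` Euler's constant. -/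
noncomputable def Cnaught (m : ℕ) (v : ℕ → ℝ) (α : ℕ → ℂ) : ℂ :=
  ∏ j ∈ Finset.Icc 1 m,
    ((v j * Real.exp Real.eulerMascheroniConstant : ℝ) : ℂ) ^ (-α j)

/-- The characterization of the solution `p(·) = p(·, a, b)` of the adjoint delay
differential equation (case `Re a < 1`, with `a = 1 + α₀`):
it vanishes on `(−∞, 0]`, equals `(C₀/Γ(1−a))·u^{−a}` on `(0, v₁]`, is continuous
on `(0, ∞)`, and satisfies the integrated form of the delay equation beyond `v₁`. -/
def IsAdjointP (m : ℕ) (v : ℕ → ℝ) (α : ℕ → ℂ) (p : ℝ → ℂ) : Prop :=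
  (∀ u : ℝ, u ≤ 0 → p u = 0) ∧
  (∀ u : ℝ, 0 < u → u ≤ v 1 →
    p u = Cnaught m v α / Complex.Gamma (1 - (1 + α 0)) * (u : ℂ) ^ (-(1 + α 0))) ∧
  ContinuousOn p (Set.Ioi 0) ∧
  (∀ u : ℝ, v 1 ≤ u →
    (u : ℂ) ^ (1 + α 0) * p u = ((v 1 : ℝ) : ℂ) ^ (1 + α 0) * p (v 1) -
      ∫ t in (v 1)..u, (t : ℂ) ^ ((1 + α 0) - 1) * ∑ j ∈ Finset.Icc 1 m, α j * p (t - v j))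

/-!
The equation is solved by the method of steps. Moving `u^a` to the right turns the conditions
into a fixed-point equation `p = F p` (`F = delayStep`), where `F p (u)` for `u ≤ s + v₁` only involves the
values of `p` on `(-∞, s]`, because every delay `v_j` is at least `v₁ > 0`. For such a causal
operator the iterates `F^[k+1] 0` stabilise on `(-∞, k v₁]`, so they define a unique fixed point.
It is continuous on `(0, ∞)`: `F` maps locally integrable functions to functions that are
continuous there, and locally integrable because `u^{-a}` is integrable at `0` when `Re a < 1`.
-/

structure IsCausalWithLag {β : Type*} (F : (ℝ → β) → ℝ → β) (d : ℝ) : Prop where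
  eqOn_Iic_zero (q₁ q₂ : ℝ → β) : EqOn (F q₁) (F q₂) (Iic 0)
  eqOn_Iic_add {q₁ q₂ : ℝ → β} {s : ℝ} : EqOn q₁ q₂ (Iic s) → EqOn (F q₁) (F q₂) (Iic (s + d))

lemma le_natCeil_div_mul {d : ℝ} (hd : 0 < d) (u : ℝ) : u ≤ ⌈u / d⌉₊ * d :=
  (div_le_iff₀ hd).1 (Nat.le_ceil _)

noncomputable def stepFixedPoint {β : Type*} (F : (ℝ → β) → ℝ → β) (d : ℝ) (q₀ : ℝ → β)
    (u : ℝ) : β :=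
  F^[⌈u / d⌉₊ + 1] q₀ u

namespace IsCausalWithLag

variable {β : Type*} {F : (ℝ → β) → ℝ → β} {d : ℝ}

lemma eqOn_iterate_succ (hF : IsCausalWithLag F d) (q₀ : ℝ → β) (k : ℕ) :
    EqOn (F^[k + 1] q₀) (F^[k + 2] q₀) (Iic (k * d)) := by
  induction k with
  | zero => simpa [Function.iterate_succ_apply'] using hF.eqOn_Iic_zero q₀ (F q₀)
  | succ k ih =>
    rw [Function.iterate_succ_apply' F (k + 1), Function.iterate_succ_apply' F (k + 2)]
    simpa [add_mul] using hF.eqOn_Iic_add ih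

lemma eqOn_iterate_of_le (hF : IsCausalWithLag F d) (hd : 0 ≤ d) (q₀ : ℝ → β) {k l : ℕ}
    (hkl : k ≤ l) : EqOn (F^[k + 1] q₀) (F^[l + 1] q₀) (Iic (k * d)) := by
  induction l, hkl using Nat.le_induction with
  | base => exact eqOn_refl _ _
  | succ l hkl ih =>
    exact ih.trans <| (hF.eqOn_iterate_succ q₀ l).mono <| Iic_subset_Iic.2 <| by gcongr

lemma eqOn_stepFixedPoint_iterate (hF : IsCausalWithLag F d) (hd : 0 < d) (q₀ : ℝ → β)
    (k : ℕ) : EqOn (stepFixedPoint F d q₀) (F^[k + 1] q₀) (Iic (k * d)) := by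
  intro u hu
  rcases le_total ⌈u / d⌉₊ k with h | h
  · exact hF.eqOn_iterate_of_le hd.le q₀ h (le_natCeil_div_mul hd u)
  · exact (hF.eqOn_iterate_of_le hd.le q₀ h hu).symm

theorem map_stepFixedPoint (hF : IsCausalWithLag F d) (hd : 0 < d) (q₀ : ℝ → β) :
    F (stepFixedPoint F d q₀) = stepFixedPoint F d q₀ := by
  funext u
  have hu := le_natCeil_div_mul hd u
  calc F (stepFixedPoint F d q₀) u = F (F^[⌈u / d⌉₊ + 1] q₀) u :=
        hF.eqOn_Iic_add (hF.eqOn_stepFixedPoint_iterate hd q₀ _) (mem_Iic.2 (by linarith))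
    _ = F^[⌈u / d⌉₊ + 2] q₀ u := by rw [Function.iterate_succ_apply' F (⌈u / d⌉₊ + 1)]
    _ = stepFixedPoint F d q₀ u := (hF.eqOn_iterate_succ q₀ _ hu).symm

theorem eq_of_map_eq (hF : IsCausalWithLag F d) (hd : 0 < d) {p q : ℝ → β} (hp : F p = p)
    (hq : F q = q) : p = q := by
  have key (k : ℕ) : EqOn p q (Iic (k * d)) := by
    induction k with
    | zero => simpa [hp, hq] using hF.eqOn_Iic_zero p q
    | succ k ih => simpa [hp, hq, add_mul] using hF.eqOn_Iic_add ih
  exact funext fun u => key _ (le_natCeil_div_mul hd u)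

theorem intervalIntegrable_stepFixedPoint {E : Type*} [NormedAddCommGroup E]
    {F : (ℝ → E) → ℝ → E} (hF : IsCausalWithLag F d) (hd : 0 < d)
    (hFi : ∀ q, (∀ x y, IntervalIntegrable q volume x y) →
      ∀ x y, IntervalIntegrable (F q) volume x y)
    {q₀ : ℝ → E} (hq₀ : ∀ x y, IntervalIntegrable q₀ volume x y) (x y : ℝ) :
    IntervalIntegrable (stepFixedPoint F d q₀) volume x y := by
  set k := ⌈max x y / d⌉₊
  have hk : uIoc x y ⊆ Iic (k * d) := fun t ht => ht.2.trans (le_natCeil_div_mul hd _)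
  refine (intervalIntegrable_congr (((hF.eqOn_stepFixedPoint_iterate hd q₀ k).mono hk).symm)).1 ?_
  exact Function.Iterate.rec (fun q => ∀ x y, IntervalIntegrable q volume x y) hq₀ hFi _ x y

end IsCausalWithLag

section DelayEquation

variable (a c : ℂ) (m : ℕ) (v : ℕ → ℝ) (α : ℕ → ℂ)

/-- Cut off at `v₁` so that `∫_{v₁}^u` vanishes for `u ≤ v₁` and is integrable everywhere. -/
noncomputable def delayIntegrand (q : ℝ → ℂ) : ℝ → ℂ :=
  (Ioi (v 1)).indicator fun t => (t : ℂ) ^ (a - 1) * ∑ j ∈ Finset.Icc 1 m, α j * q (t - v j)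

noncomputable def delayStep (q : ℝ → ℂ) : ℝ → ℂ :=
  (Ioi 0).indicator fun u => (u : ℂ) ^ (-a) * (c - ∫ t in v 1..u, delayIntegrand a m v α q t)

variable {a c m v α} {q : ℝ → ℂ} {u : ℝ}

lemma ofReal_cpow_mul_eq_iff {x : ℝ} (hx : 0 < x) {z w : ℂ} :
    (x : ℂ) ^ a * z = w ↔ z = (x : ℂ) ^ (-a) * w := by
  have hxa : (x : ℂ) ^ a ≠ 0 := Complex.cpow_ne_zero_iff.2 (.inl (by exact_mod_cast hx.ne'))
  rw [Complex.cpow_neg, eq_inv_mul_iff_mul_eq₀ hxa]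

lemma continuousOn_ofReal_cpow_const (a : ℂ) : ContinuousOn (fun u : ℝ => (u : ℂ) ^ a) (Ioi 0) :=
  fun u hu => (Complex.continuousAt_ofReal_cpow_const u a (.inr hu.ne')).continuousWithinAt

lemma integral_delayIntegrand_of_le (hu : u ≤ v 1) :
    ∫ t in v 1..u, delayIntegrand a m v α q t = 0 := by
  rw [intervalIntegral.integral_of_ge hu, setIntegral_eq_zero_of_forall_eq_zero, neg_zero]
  exact fun t ht => indicator_of_notMem (not_lt.2 ht.2) _

lemma integral_delayIntegrand_of_ge (hu : v 1 ≤ u) :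
    ∫ t in v 1..u, delayIntegrand a m v α q t =
      ∫ t in v 1..u, (t : ℂ) ^ (a - 1) * ∑ j ∈ Finset.Icc 1 m, α j * q (t - v j) := by
  simp only [intervalIntegral.integral_of_le hu]
  exact setIntegral_congr_fun measurableSet_Ioc fun t ht => indicator_of_mem ht.1 _

lemma integral_delayIntegrand_congr (hv : ∀ j ∈ Finset.Icc 1 m, v 1 ≤ v j) {q₁ q₂ : ℝ → ℂ}
    {s : ℝ} (h : EqOn q₁ q₂ (Iic s)) (hu : u ≤ s + v 1) :
    ∫ t in v 1..u, delayIntegrand a m v α q₁ t = ∫ t in v 1..u, delayIntegrand a m v α q₂ t := by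
  refine intervalIntegral.integral_congr fun t ht => ?_
  by_cases htv : t ∈ Ioi (v 1)
  · have htu : t ≤ u := (le_max_iff.1 ht.2).resolve_left (not_le.2 htv)
    simp only [delayIntegrand, indicator_of_mem htv]
    exact congrArg _ (Finset.sum_congr rfl fun j hj =>
      congrArg _ (h (mem_Iic.2 (by linarith [hv j hj]))))
  · simp only [delayIntegrand, indicator_of_notMem htv]

lemma isCausalWithLag_delayStep (hv : ∀ j ∈ Finset.Icc 1 m, v 1 ≤ v j) :
    IsCausalWithLag (delayStep a c m v α) (v 1) where
  eqOn_Iic_zero q₁ q₂ u hu := by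
    have hu' : u ∉ Ioi 0 := notMem_Ioi.2 hu
    rw [delayStep, delayStep, indicator_of_notMem hu', indicator_of_notMem hu']
  eqOn_Iic_add h u hu := by
    simp only [delayStep, indicator_apply, integral_delayIntegrand_congr hv h hu]

lemma intervalIntegrable_comp_sub_right (hq : ∀ x y, IntervalIntegrable q volume x y)
    (b x y : ℝ) : IntervalIntegrable (fun t => q (t - b)) volume x y := by
  simpa using (hq (x - b) (y - b)).comp_sub_right b

lemma intervalIntegrable_delayIntegrand (hv1 : 0 < v 1)
    (hq : ∀ x y, IntervalIntegrable q volume x y) (x y : ℝ) :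
    IntervalIntegrable (delayIntegrand a m v α q) volume x y := by
  set B := max (max x y) (v 1)
  have hB : IntervalIntegrable
      (fun t => (t : ℂ) ^ (a - 1) * ∑ j ∈ Finset.Icc 1 m, α j * q (t - v j)) volume (v 1) B := by
    refine IntervalIntegrable.continuousOn_mul ?_ ((continuousOn_ofReal_cpow_const _).mono ?_)
    · simpa only [Finset.sum_fn] using IntervalIntegrable.sum _ fun j _ =>
        (intervalIntegrable_comp_sub_right hq (v j) _ _).const_mul (α j)
    · rw [uIcc_of_le (le_max_right _ _)]
      exact fun t ht => hv1.trans_le ht.1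
  rw [intervalIntegrable_iff, delayIntegrand, integrableOn_indicator_iff measurableSet_Ioi]
  refine (intervalIntegrable_iff.1 hB).mono_set fun t ⟨htv, htxy⟩ => ?_
  rw [uIoc_of_le (le_max_right _ _)]
  exact ⟨htv, htxy.2.trans (le_max_left _ _)⟩

lemma continuous_integral_delayIntegrand (hv1 : 0 < v 1)
    (hq : ∀ x y, IntervalIntegrable q volume x y) :
    Continuous fun u => ∫ t in v 1..u, delayIntegrand a m v α q t :=
  intervalIntegral.continuous_primitive (intervalIntegrable_delayIntegrand hv1 hq) _

lemma continuousOn_delayStep (hv1 : 0 < v 1) (hq : ∀ x y, IntervalIntegrable q volume x y) :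
    ContinuousOn (delayStep a c m v α q) (Ioi 0) :=
  ((continuousOn_ofReal_cpow_const _).mul
    (continuous_const.sub (continuous_integral_delayIntegrand hv1 hq)).continuousOn).congr
    fun _ hu => indicator_of_mem hu _

lemma intervalIntegrable_delayStep (ha : a.re < 1) (hv1 : 0 < v 1)
    (hq : ∀ x y, IntervalIntegrable q volume x y) (x y : ℝ) :
    IntervalIntegrable (delayStep a c m v α q) volume x y := by
  have h : IntervalIntegrable
      (fun u : ℝ => (u : ℂ) ^ (-a) * (c - ∫ t in v 1..u, delayIntegrand a m v α q t)) volume x y :=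
    (intervalIntegral.intervalIntegrable_cpow' (by rw [Complex.neg_re]; linarith)).mul_continuousOn
      (continuous_const.sub (continuous_integral_delayIntegrand hv1 hq)).continuousOn
  exact ⟨h.1.indicator measurableSet_Ioi, h.2.indicator measurableSet_Ioi⟩

lemma ofReal_cpow_mul_delayStep (hu : 0 < u) :
    (u : ℂ) ^ a * delayStep a c m v α q u = c - ∫ t in v 1..u, delayIntegrand a m v α q t :=
  (ofReal_cpow_mul_eq_iff hu).2 (indicator_of_mem hu _)

theorem isAdjointP_iff (hv1 : 0 < v 1) :
    IsAdjointP m v α q ↔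
      delayStep (1 + α 0) (Cnaught m v α / Complex.Gamma (1 - (1 + α 0))) m v α q = q ∧
        ContinuousOn q (Ioi 0) := by
  set c := Cnaught m v α / Complex.Gamma (1 - (1 + α 0))
  constructor
  · rintro ⟨h_nonpos, h_init, h_cont, h_eq⟩
    have key (u : ℝ) (hu : 0 < u) : (u : ℂ) ^ (1 + α 0) * q u =
        c - ∫ t in v 1..u, delayIntegrand (1 + α 0) m v α q t := by
      rcases le_total u (v 1) with h | h
      · rw [integral_delayIntegrand_of_le h, sub_zero, ofReal_cpow_mul_eq_iff hu, h_init u hu h,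
          mul_comm]
      · rw [h_eq u h, integral_delayIntegrand_of_ge h,
          (ofReal_cpow_mul_eq_iff hv1).2 (by rw [h_init _ hv1 le_rfl, mul_comm])]
    refine ⟨funext fun u => ?_, h_cont⟩
    rcases le_or_gt u 0 with hu | hu
    · rw [h_nonpos u hu]
      exact indicator_of_notMem (notMem_Ioi.2 hu) _
    · rw [(ofReal_cpow_mul_eq_iff hu).1 (ofReal_cpow_mul_delayStep hu),
        (ofReal_cpow_mul_eq_iff hu).1 (key u hu)]
  · rintro ⟨h_fix, h_cont⟩
    have key (u : ℝ) (hu : 0 < u) : (u : ℂ) ^ (1 + α 0) * q u =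
        c - ∫ t in v 1..u, delayIntegrand (1 + α 0) m v α q t := by
      conv_lhs => rw [← h_fix]
      exact ofReal_cpow_mul_delayStep hu
    refine ⟨fun u hu => ?_, fun u hu hu1 => ?_, h_cont, fun u hu => ?_⟩
    · rw [← h_fix]
      exact indicator_of_notMem (notMem_Ioi.2 hu) _
    · rw [(ofReal_cpow_mul_eq_iff hu).1 (key u hu), integral_delayIntegrand_of_le hu1, sub_zero,
        mul_comm]
    · rw [key u (hv1.trans_le hu), key _ hv1, intervalIntegral.integral_same, sub_zero,
        integral_delayIntegrand_of_ge hu]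

end DelayEquation

theorem stmt11_general (m : ℕ) (hm : 1 ≤ m) (v : ℕ → ℝ) (α : ℕ → ℂ)
    (hv0 : v 0 = 0) (hv : ∀ i, i < m → v i < v (i + 1))
    (ha : (1 + α 0).re < 1) :
    ∃! p : ℝ → ℂ, IsAdjointP m v α p := by
  have hv1 : 0 < v 1 := hv0 ▸ hv 0 hm
  have hF : IsCausalWithLag
      (delayStep (1 + α 0) (Cnaught m v α / Complex.Gamma (1 - (1 + α 0))) m v α) (v 1) :=
    isCausalWithLag_delayStep fun j hj =>
      (strictMonoOn_Iic_of_lt_succ hv).monotoneOn (mem_Iic.2 hm)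
        (mem_Iic.2 (Finset.mem_Icc.1 hj).2) (Finset.mem_Icc.1 hj).1
  simp only [isAdjointP_iff hv1]
  refine ⟨stepFixedPoint _ (v 1) 0, ⟨hF.map_stepFixedPoint hv1 0, ?_⟩,
    fun q hq => hF.eq_of_map_eq hv1 hq.1 (hF.map_stepFixedPoint hv1 0)⟩
  rw [← hF.map_stepFixedPoint hv1 0]
  exact continuousOn_delayStep hv1 (hF.intervalIntegrable_stepFixedPoint hv1
    (fun _ => intervalIntegrable_delayStep ha hv1) fun _ _ => intervalIntegrable_const)

theorem stmt11 (m : ℕ) (hm : 1 ≤ m) (v : ℕ → ℝ) (α : ℕ → ℂ)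
    (hv0 : v 0 = 0) (hv : ∀ i, i < m → v i < v (i + 1))
    (hα : ∀ j, 1 ≤ j → j ≤ m → α j ≠ 0)
    (ha : (1 + α 0).re < 1) :
    ∃! p : ℝ → ℂ, IsAdjointP m v α p :=
  stmt11_general m hm v α hv0 hv ha
end

section
/- Suppose q_1 : ℝ → ℂ and q_2 : ℝ → ℂ both solve (E+), and suppose each is exponentially bounded: for i = 1, 2 there exist λ_i > 0 and constants B_i, u_i > 0 with |q_i(u)| ≤ B_i·e^{λ_i u} for all u ≥ u_i. Then q_1 and q_2 are linearly dependent over ℂ on (0,∞): there exist complex numbers c_1, c_2, not both zero, such that c_1 q_1(u) + c_2 q_2(u) = 0 for all u > 0. -/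
/-!
Take `lam > 0` larger than both growth rates and `U` so large that
`K := ∑ ‖α j‖ exp (lam v_j) < lam U`. A solution with `|q u| ≤ M exp (lam u)` on `[U, ∞)` and
`q U = 0` satisfies `|q'(t)| ≤ (K / U) M exp (lam t)` there, hence
`|q u| ≤ (K / (lam U)) M exp (lam u)`: iterating this contraction, `q = 0` on `[U, ∞)`.
Going backwards: if `q = 0` on `[b, ∞)`, then on `[b - v_1, b]` every shifted term vanishes and
the equation becomes the Euler equation `t q' = α_0 q`, whose solution vanishing at `b` is zero;
so `q = 0` on `(0, ∞)`.
Now if `q₁ U ≠ 0` then `q₂ U • q₁ - q₁ U • q₂` is such a solution vanishing at `U`.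
-/

open MeasureTheory Filter Set

/-- `q : ℝ → ℂ` solves the advanced-argument equation (E+):
`q` is differentiable at every `u > 0` and
`u·q′(u) = ∑_{j=0}^m α_j q(u + v_j)` for all `u > 0`. -/
def SolvesEplus (m : ℕ) (v : ℕ → ℝ) (α : ℕ → ℂ) (q : ℝ → ℂ) : Prop :=
  ∀ u : ℝ, 0 < u → DifferentiableAt ℝ q u ∧
    (u : ℂ) * deriv q u = ∑ j ∈ Finset.range (m + 1), α j * q (u + v j)

noncomputable def shiftWeight (m : ℕ) (v : ℕ → ℝ) (α : ℕ → ℂ) (lam : ℝ) : ℝ :=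
  ∑ j ∈ Finset.range (m + 1), ‖α j‖ * Real.exp (lam * v j)

def ExpBoundedFrom (lam U : ℝ) (q : ℝ → ℂ) : Prop :=
  ∃ B, ∀ u, U ≤ u → ‖q u‖ ≤ B * Real.exp (lam * u)

section

variable {m : ℕ} {v : ℕ → ℝ} {α : ℕ → ℂ} {q q₁ q₂ : ℝ → ℂ} {lam U : ℝ}

lemma shiftWeight_nonneg : 0 ≤ shiftWeight m v α lam :=
  Finset.sum_nonneg fun _ _ => mul_nonneg (norm_nonneg _) (Real.exp_pos _).le

lemma monotoneOn_Iic_of_lt_succ (hv : ∀ i, i < m → v i < v (i + 1)) : MonotoneOn v (Iic m) :=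
  (strictMonoOn_Iic_of_lt_succ hv).monotoneOn

lemma exists_pos_le_shift (hv0 : v 0 = 0) (hv : ∀ i, i < m → v i < v (i + 1)) :
    ∃ δ > 0, ∀ j, 1 ≤ j → j ≤ m → δ ≤ v j := by
  rcases Nat.eq_zero_or_pos m with rfl | hm
  · exact ⟨1, one_pos, fun j h₁ h₂ => by omega⟩
  · exact ⟨v 1, hv0 ▸ hv 0 hm, fun j h₁ h₂ =>
      monotoneOn_Iic_of_lt_succ hv (mem_Iic.2 hm) (mem_Iic.2 h₂) h₁⟩

namespace ExpBoundedFrom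

lemma add (h₁ : ExpBoundedFrom lam U q₁) (h₂ : ExpBoundedFrom lam U q₂) :
    ExpBoundedFrom lam U (fun u => q₁ u + q₂ u) := by
  obtain ⟨B₁, hB₁⟩ := h₁
  obtain ⟨B₂, hB₂⟩ := h₂
  refine ⟨B₁ + B₂, fun u hu => ?_⟩
  calc ‖q₁ u + q₂ u‖ ≤ ‖q₁ u‖ + ‖q₂ u‖ := norm_add_le _ _
    _ ≤ B₁ * Real.exp (lam * u) + B₂ * Real.exp (lam * u) := add_le_add (hB₁ u hu) (hB₂ u hu)
    _ = (B₁ + B₂) * Real.exp (lam * u) := by ring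

lemma const_mul (c : ℂ) (h : ExpBoundedFrom lam U q) :
    ExpBoundedFrom lam U (fun u => c * q u) := by
  obtain ⟨B, hB⟩ := h
  refine ⟨‖c‖ * B, fun u hu => ?_⟩
  rw [norm_mul, mul_assoc]
  exact mul_le_mul_of_nonneg_left (hB u hu) (norm_nonneg c)

lemma mono {lam' U' : ℝ} (h : ExpBoundedFrom lam U q) (hlam : lam ≤ lam') (hU : U ≤ U')
    (hU' : 0 ≤ U') : ExpBoundedFrom lam' U' q := by
  obtain ⟨B, hB⟩ := h
  refine ⟨max B 0, fun u hu => ?_⟩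
  calc ‖q u‖ ≤ B * Real.exp (lam * u) := hB u (hU.trans hu)
    _ ≤ max B 0 * Real.exp (lam * u) := by gcongr; exact le_max_left B 0
    _ ≤ max B 0 * Real.exp (lam' * u) := by
      gcongr
      exact hU'.trans hu

end ExpBoundedFrom

namespace SolvesEplus

lemma add (h₁ : SolvesEplus m v α q₁) (h₂ : SolvesEplus m v α q₂) :
    SolvesEplus m v α (fun u => q₁ u + q₂ u) := by
  intro u hu
  obtain ⟨hd₁, he₁⟩ := h₁ u hu
  obtain ⟨hd₂, he₂⟩ := h₂ u hu
  refine ⟨hd₁.add hd₂, ?_⟩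
  rw [deriv_fun_add hd₁ hd₂, mul_add, he₁, he₂, ← Finset.sum_add_distrib]
  simp only [mul_add]

lemma const_mul (c : ℂ) (h : SolvesEplus m v α q) :
    SolvesEplus m v α (fun u => c * q u) := by
  intro u hu
  obtain ⟨hd, he⟩ := h u hu
  refine ⟨hd.const_mul c, ?_⟩
  rw [deriv_const_mul c hd, mul_left_comm, he, Finset.mul_sum]
  simp only [mul_left_comm]

lemma hasDerivAt (hq : SolvesEplus m v α q) {t : ℝ} (ht : 0 < t) :
    HasDerivAt q ((∑ j ∈ Finset.range (m + 1), α j * q (t + v j)) / t) t := by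
  obtain ⟨hd, he⟩ := hq t ht
  rw [← he, mul_div_cancel_left₀ _ (Complex.ofReal_ne_zero.2 ht.ne')]
  exact hd.hasDerivAt

end SolvesEplus

lemma norm_sum_shift_le (hvpos : ∀ j ≤ m, 0 ≤ v j) {M t : ℝ}
    (hb : ∀ w, U ≤ w → ‖q w‖ ≤ M * Real.exp (lam * w)) (ht : U ≤ t) :
    ‖∑ j ∈ Finset.range (m + 1), α j * q (t + v j)‖ ≤
      shiftWeight m v α lam * M * Real.exp (lam * t) := by
  calc ‖∑ j ∈ Finset.range (m + 1), α j * q (t + v j)‖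
      ≤ ∑ j ∈ Finset.range (m + 1), ‖α j‖ * (M * Real.exp (lam * (t + v j))) := by
        refine (norm_sum_le _ _).trans (Finset.sum_le_sum fun j hj => ?_)
        have hvj := hvpos j (Nat.lt_succ_iff.mp (Finset.mem_range.mp hj))
        rw [norm_mul]
        exact mul_le_mul_of_nonneg_left (hb _ (by linarith)) (norm_nonneg _)
    _ = shiftWeight m v α lam * M * Real.exp (lam * t) := by
        rw [shiftWeight, Finset.sum_mul, Finset.sum_mul]
        refine Finset.sum_congr rfl fun j _ => ?_
        rw [mul_add, Real.exp_add]
        ring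

lemma SolvesEplus.norm_le_of_norm_le (hvpos : ∀ j ≤ m, 0 ≤ v j) (hq : SolvesEplus m v α q)
    {M : ℝ} (hlam : 0 < lam) (hU : 0 < U) (hM : 0 ≤ M)
    (hb : ∀ w, U ≤ w → ‖q w‖ ≤ M * Real.exp (lam * w)) (hqU : q U = 0) :
    ∀ u, U ≤ u → ‖q u‖ ≤ shiftWeight m v α lam / (lam * U) * M * Real.exp (lam * u) := by
  intro u hu
  have hK := shiftWeight_nonneg (m := m) (v := v) (α := α) (lam := lam)
  have hq' : ∀ t ∈ Icc U u, HasDerivAt q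
      ((∑ j ∈ Finset.range (m + 1), α j * q (t + v j)) / t) t :=
    fun t ht => hq.hasDerivAt (hU.trans_le ht.1)
  refine image_norm_le_of_norm_deriv_right_le_deriv_boundary
    (B := fun t => shiftWeight m v α lam / (lam * U) * M * Real.exp (lam * t))
    (B' := fun t => shiftWeight m v α lam / U * M * Real.exp (lam * t))
    (fun t ht => (hq' t ht).continuousAt.continuousWithinAt)
    (fun t ht => (hq' t (Ico_subset_Icc_self ht)).hasDerivWithinAt) ?_ (fun t => ?_)
    (fun t ht => ?_) ⟨hu, le_rfl⟩
  · rw [hqU, norm_zero]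
    positivity
  · refine (((hasDerivAt_id t).const_mul lam).exp.const_mul
      (shiftWeight m v α lam / (lam * U) * M)).congr_deriv ?_
    simp only [id]
    field_simp
  · have ht0 : 0 < t := hU.trans_le ht.1
    rw [norm_div, Complex.norm_real, Real.norm_of_nonneg ht0.le]
    calc ‖∑ j ∈ Finset.range (m + 1), α j * q (t + v j)‖ / t
        ≤ shiftWeight m v α lam * M * Real.exp (lam * t) / U :=
          div_le_div₀ (by positivity) (norm_sum_shift_le hvpos hb ht.1) hU ht.1
      _ = shiftWeight m v α lam / U * M * Real.exp (lam * t) := by ring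

lemma SolvesEplus.eq_zero_on_Ici_of_eq_zero (hvpos : ∀ j ≤ m, 0 ≤ v j)
    (hq : SolvesEplus m v α q) (hlam : 0 < lam) (hU : 0 < U)
    (hK : shiftWeight m v α lam < lam * U) (hb : ExpBoundedFrom lam U q) (hqU : q U = 0) :
    ∀ u, U ≤ u → q u = 0 := by
  obtain ⟨B, hB⟩ := hb
  set ρ := shiftWeight m v α lam / (lam * U)
  have hρ0 : 0 ≤ ρ := div_nonneg shiftWeight_nonneg (by positivity)
  have hρ1 : ρ < 1 := (div_lt_one (by positivity)).2 hK
  have hB0 : 0 ≤ B :=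
    nonneg_of_mul_nonneg_left ((norm_nonneg _).trans (hB U le_rfl)) (Real.exp_pos _)
  have hpow : ∀ n : ℕ, ∀ u, U ≤ u → ‖q u‖ ≤ ρ ^ n * B * Real.exp (lam * u) := by
    intro n
    induction n with
    | zero => simpa using hB
    | succ n ih =>
      intro u hu
      calc ‖q u‖ ≤ ρ * (ρ ^ n * B) * Real.exp (lam * u) :=
            hq.norm_le_of_norm_le hvpos hlam hU (by positivity) ih hqU u hu
        _ = ρ ^ (n + 1) * B * Real.exp (lam * u) := by ring
  intro u hu
  have hlim : Tendsto (fun n : ℕ => ρ ^ n * B * Real.exp (lam * u)) atTop (nhds 0) := by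
    simpa using ((tendsto_pow_atTop_nhds_zero_of_lt_one hρ0 hρ1).mul_const B).mul_const
      (Real.exp (lam * u))
  exact norm_le_zero_iff.mp (ge_of_tendsto' hlim fun n => hpow n u hu)

lemma eq_zero_of_hasDerivAt_mul_div {r : ℝ → ℂ} {a b : ℝ} {c : ℂ} (ha : 0 < a) (hab : a ≤ b)
    (hr : ∀ t ∈ Icc a b, HasDerivAt r (c * r t / t) t) (hrb : r b = 0) : r a = 0 := by
  have hconst : ∀ t ∈ Icc a b,
      HasDerivAt (fun t => r t * Complex.exp (-c * Real.log t)) 0 t := by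
    intro t ht
    have ht0 : (t : ℂ) ≠ 0 := Complex.ofReal_ne_zero.2 (ha.trans_le ht.1).ne'
    have hlog := ((Real.hasDerivAt_log (ha.trans_le ht.1).ne').ofReal_comp.const_mul (-c)).cexp
    refine ((hr t ht).mul hlog).congr_deriv ?_
    rw [Complex.ofReal_inv]
    field_simp
    ring
  have h := constant_of_has_deriv_right_zero
    (fun t ht => (hconst t ht).continuousAt.continuousWithinAt)
    (fun t ht => (hconst t (Ico_subset_Icc_self ht)).hasDerivWithinAt) b ⟨hab, le_rfl⟩
  rw [hrb, zero_mul] at h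
  exact (mul_eq_zero.mp h.symm).resolve_right (Complex.exp_ne_zero _)

lemma SolvesEplus.eq_zero_of_eq_zero_on_Ici_of_le_add (hv0 : v 0 = 0) (hq : SolvesEplus m v α q)
    {δ a b : ℝ} (hδ : ∀ j, 1 ≤ j → j ≤ m → δ ≤ v j) (ha : 0 < a) (hab : b ≤ a + δ)
    (hb : ∀ u, b ≤ u → q u = 0) : ∀ u, a ≤ u → q u = 0 := by
  intro u hu
  rcases le_or_gt b u with hbu | hub
  · exact hb u hbu
  refine eq_zero_of_hasDerivAt_mul_div (c := α 0) (ha.trans_le hu) hub.le (fun t ht => ?_)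
    (hb b le_rfl)
  have hshift : ∀ j ∈ Finset.range m, α (j + 1) * q (t + v (j + 1)) = 0 := by
    intro j hj
    have := hδ (j + 1) (Nat.le_add_left 1 j) (Finset.mem_range.mp hj)
    rw [hb _ (by linarith [ht.1]), mul_zero]
  have hsum : ∑ j ∈ Finset.range (m + 1), α j * q (t + v j) = α 0 * q t := by
    rw [Finset.sum_range_succ', Finset.sum_eq_zero hshift, hv0, add_zero, zero_add]
  simpa only [hsum] using hq.hasDerivAt ((ha.trans_le hu).trans_le ht.1)

lemma SolvesEplus.eq_zero_of_eq_zero_on_Ici (hv0 : v 0 = 0)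
    (hv : ∀ i, i < m → v i < v (i + 1)) (hq : SolvesEplus m v α q) {b : ℝ}
    (hb : ∀ u, b ≤ u → q u = 0) : ∀ u, 0 < u → q u = 0 := by
  obtain ⟨δ, hδ0, hδ⟩ := exists_pos_le_shift hv0 hv
  have hstep : ∀ n : ℕ, ∀ a, 0 < a → b ≤ a + n * δ → ∀ u, a ≤ u → q u = 0 := by
    intro n
    induction n with
    | zero => exact fun a _ hab u hu => hb u (by simp at hab; linarith)
    | succ n ih =>
      intro a ha hab
      push_cast at hab
      refine hq.eq_zero_of_eq_zero_on_Ici_of_le_add hv0 hδ ha ?_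
        (ih (max a (b - n * δ)) (lt_max_of_lt_left ha) ?_)
      · exact max_le (by linarith) (by linarith)
      · linarith [le_max_right a (b - n * δ)]
  intro u hu
  obtain ⟨n, hn⟩ := exists_nat_ge ((b - u) / δ)
  rw [div_le_iff₀ hδ0] at hn
  exact hstep n u hu (by linarith) u le_rfl

lemma SolvesEplus.eq_zero_of_eq_zero_at (hv0 : v 0 = 0) (hv : ∀ i, i < m → v i < v (i + 1))
    (hq : SolvesEplus m v α q) (hlam : 0 < lam) (hU : 0 < U)
    (hK : shiftWeight m v α lam < lam * U) (hb : ExpBoundedFrom lam U q) (hqU : q U = 0) :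
    ∀ u, 0 < u → q u = 0 :=
  have hvpos : ∀ j ≤ m, 0 ≤ v j := fun j hj =>
    hv0 ▸ monotoneOn_Iic_of_lt_succ hv (mem_Iic.2 (Nat.zero_le m)) (mem_Iic.2 hj) (Nat.zero_le j)
  hq.eq_zero_of_eq_zero_on_Ici hv0 hv (hq.eq_zero_on_Ici_of_eq_zero hvpos hlam hU hK hb hqU)

end

theorem stmt19_general (m : ℕ) (v : ℕ → ℝ) (α : ℕ → ℂ)
    (hv0 : v 0 = 0) (hv : ∀ i, i < m → v i < v (i + 1))
    (q₁ q₂ : ℝ → ℂ) (hq₁ : SolvesEplus m v α q₁) (hq₂ : SolvesEplus m v α q₂)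
    (lam₁ lam₂ B₁ B₂ u₁ u₂ : ℝ)
    (hbound₁ : ∀ u : ℝ, u₁ ≤ u → ‖q₁ u‖ ≤ B₁ * Real.exp (lam₁ * u))
    (hbound₂ : ∀ u : ℝ, u₂ ≤ u → ‖q₂ u‖ ≤ B₂ * Real.exp (lam₂ * u)) :
    ∃ c₁ c₂ : ℂ, (c₁ ≠ 0 ∨ c₂ ≠ 0) ∧
      ∀ u : ℝ, 0 < u → c₁ * q₁ u + c₂ * q₂ u = 0 := by
  set lam := max (max lam₁ lam₂) 1
  have hlam : 0 < lam := lt_max_of_lt_right one_pos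
  obtain ⟨U, hU, hUu, hKU⟩ : ∃ U, 0 < U ∧ max u₁ u₂ ≤ U ∧ shiftWeight m v α lam < lam * U :=
    ((eventually_gt_atTop 0).and ((eventually_ge_atTop _).and
      ((tendsto_id.const_mul_atTop hlam).eventually_gt_atTop _))).exists
  have hb₁ : ExpBoundedFrom lam U q₁ := ExpBoundedFrom.mono ⟨B₁, hbound₁⟩
    ((le_max_left _ _).trans (le_max_left _ _)) ((le_max_left _ _).trans hUu) hU.le
  have hb₂ : ExpBoundedFrom lam U q₂ := ExpBoundedFrom.mono ⟨B₂, hbound₂⟩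
    ((le_max_right _ _).trans (le_max_left _ _)) ((le_max_right _ _).trans hUu) hU.le
  by_cases hq₁U : q₁ U = 0
  · refine ⟨1, 0, Or.inl one_ne_zero, fun u hu => ?_⟩
    simp [hq₁.eq_zero_of_eq_zero_at hv0 hv hlam hU hKU hb₁ hq₁U u hu]
  · exact ⟨q₂ U, -q₁ U, Or.inr (neg_ne_zero.mpr hq₁U),
      ((hq₁.const_mul _).add (hq₂.const_mul _)).eq_zero_of_eq_zero_at hv0 hv hlam hU hKU
        ((hb₁.const_mul _).add (hb₂.const_mul _)) (by ring)⟩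

theorem stmt19 (m : ℕ) (v : ℕ → ℝ) (α : ℕ → ℂ)
    (hv0 : v 0 = 0) (hv : ∀ i, i < m → v i < v (i + 1))
    (hα : ∀ j, 1 ≤ j → j ≤ m → α j ≠ 0)
    (q₁ q₂ : ℝ → ℂ) (hq₁ : SolvesEplus m v α q₁) (hq₂ : SolvesEplus m v α q₂)
    (lam₁ lam₂ B₁ B₂ u₁ u₂ : ℝ) (hlam₁ : 0 < lam₁) (hlam₂ : 0 < lam₂)
    (hB₁ : 0 < B₁) (hB₂ : 0 < B₂) (hu₁ : 0 < u₁) (hu₂ : 0 < u₂)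
    (hbound₁ : ∀ u : ℝ, u₁ ≤ u → ‖q₁ u‖ ≤ B₁ * Real.exp (lam₁ * u))
    (hbound₂ : ∀ u : ℝ, u₂ ≤ u → ‖q₂ u‖ ≤ B₂ * Real.exp (lam₂ * u)) :
    ∃ c₁ c₂ : ℂ, (c₁ ≠ 0 ∨ c₂ ≠ 0) ∧
      ∀ u : ℝ, 0 < u → c₁ * q₁ u + c₂ * q₂ u = 0 :=
  stmt19_general m v α hv0 hv q₁ q₂ hq₁ hq₂ lam₁ lam₂ B₁ B₂ u₁ u₂ hbound₁ hbound₂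
end
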